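/- arXiv:1510.08936 — 3 statements merged into one kernel-verified Lean document; each statement's English description precedes it below -/
import Mathlib

section
/- Let λ : ℕ → ℝ be nondecreasing, let N ∈ ℕ satisfy λ_{N+1} > λ_N, and set θ = (λ_N + λ_{N+1})/2. Suppose that for each n ∈ ℕ the functions v_n : ℝ → ℂ are differentiable and h_n : ℝ → ℂ are measurable with v_n′(t) + λ_n v_n(t) = h_n(t) for all t ∈ ℝ, and that ∫_ℝ e^{2θt} Σ_n |v_n(t)|² dt < ∞ and ∫_ℝ e^{2θt} Σ_n |h_n(t)|² dt < ∞. Then ∫_ℝ e^{2θt} Σ_n |v_n(t)|² dt ≤ 4 (λ_{N+1} − λ_N)⁻² ∫_ℝ e^{2θt} Σ_n |h_n(t)|² dt. -/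
/-!
Mode by mode, `w = e^{θt} v_n` solves `w' + (λ_n - θ) w = g` with `g = e^{θt} h_n`. Both `‖w‖²`
and its derivative `2⟪w, g⟫ - 2(λ_n - θ)‖w‖²` are integrable on `ℝ`, so the derivative
integrates to zero: `(λ_n - θ) ‖w‖²_{L²} = ∫ ⟪w, g⟫`. Cauchy–Schwarz, in the AM–GM form
`2|a|⟪x, y⟫ ≤ a²‖x‖² + ‖y‖²`, turns this into `(λ_n - θ)² ‖w‖²_{L²} ≤ ‖g‖²_{L²}`. The midpoint
`θ` of the spectral gap is at distance at least `(λ_{N+1} - λ_N)/2` from every `λ_n`, and summing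
over `n` gives the estimate.
-/

open MeasureTheory ENNReal
open scoped RealInnerProductSpace

section
variable {α E : Type*} [MeasurableSpace α] {μ : Measure α} [NormedAddCommGroup E]

theorem integrable_norm_sq_of_lintegral_enorm_sq_lt_top {f : α → E}
    (hf : AEStronglyMeasurable f μ) (hfin : ∫⁻ x, ‖f x‖ₑ ^ 2 ∂μ < ⊤) :
    Integrable (fun x => ‖f x‖ ^ 2) μ :=
  ⟨hf.norm.pow 2, by simpa [HasFiniteIntegral, enorm_pow] using hfin⟩

theorem ofReal_integral_norm_sq {f : α → E} (hf : Integrable (fun x => ‖f x‖ ^ 2) μ) :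
    ENNReal.ofReal (∫ x, ‖f x‖ ^ 2 ∂μ) = ∫⁻ x, ‖f x‖ₑ ^ 2 ∂μ := by
  rw [ofReal_integral_eq_lintegral_ofReal hf (ae_of_all _ fun x => by positivity)]
  simp [ENNReal.ofReal_pow]

theorem lintegral_mul_tsum {ι : Type*} [Countable ι] {ρ : α → ℝ≥0∞} {f : ι → α → ℝ≥0∞}
    (hρ : AEMeasurable ρ μ) (hf : ∀ i, AEMeasurable (f i) μ) :
    ∫⁻ x, ρ x * ∑' i, f i x ∂μ = ∑' i, ∫⁻ x, ρ x * f i x ∂μ := by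
  simp_rw [← ENNReal.tsum_mul_left]
  exact lintegral_tsum fun i => hρ.mul (hf i)

theorem enorm_exp_smul_sq [NormedSpace ℝ E] (θ t : ℝ) (x : E) :
    ‖Real.exp (θ * t) • x‖ₑ ^ 2 = ENNReal.ofReal (Real.exp (2 * θ * t)) * ‖x‖ₑ ^ 2 := by
  rw [enorm_smul, mul_pow, Real.enorm_of_nonneg (Real.exp_pos _).le,
    ← ENNReal.ofReal_pow (Real.exp_pos _).le, ← Real.exp_nat_mul]
  push_cast
  ring_nf

end

section
variable {E : Type*} [NormedAddCommGroup E] [InnerProductSpace ℝ E]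

theorem two_mul_abs_mul_abs_real_inner_le (c : ℝ) (x y : E) :
    2 * |c| * |⟪x, y⟫| ≤ c ^ 2 * ‖x‖ ^ 2 + ‖y‖ ^ 2 := by
  have h := two_mul_le_add_sq (|c| * ‖x‖) ‖y‖
  rw [mul_pow, sq_abs] at h
  nlinarith [abs_nonneg c, abs_real_inner_le_norm x y]

theorem integral_inner_eq_mul_integral_norm_sq {a : ℝ} {w g : ℝ → E}
    (hw : ∀ t, HasDerivAt w (g t - a • w t) t) (hwi : Integrable (fun t => ‖w t‖ ^ 2))
    (hwg : Integrable (fun t => ⟪w t, g t⟫)) :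
    ∫ t, ⟪w t, g t⟫ = a * ∫ t, ‖w t‖ ^ 2 := by
  have hderiv : ∀ t, HasDerivAt (‖w ·‖ ^ 2) (2 * ⟪w t, g t⟫ - 2 * a * ‖w t‖ ^ 2) t := fun t => by
    convert (hw t).norm_sq using 1
    rw [inner_sub_right, real_inner_smul_right, real_inner_self_eq_norm_sq]; ring
  have hzero := integral_eq_zero_of_hasDerivAt_of_integrable hderiv
    ((hwg.const_mul 2).sub (hwi.const_mul (2 * a))) hwi
  rw [integral_sub (hwg.const_mul 2) (hwi.const_mul (2 * a)), integral_const_mul,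
    integral_const_mul] at hzero
  linarith

variable [CompleteSpace E]

theorem aestronglyMeasurable_of_hasDerivAt_sub_smul {a : ℝ} {w g : ℝ → E}
    (hw : ∀ t, HasDerivAt w (g t - a • w t) t) (μ : Measure ℝ) : AEStronglyMeasurable g μ := by
  have hg : g = fun t => deriv w t + a • w t := funext fun t => by
    rw [(hw t).deriv, sub_add_cancel]
  have hwc : Continuous w := continuous_iff_continuousAt.2 fun t => (hw t).continuousAt
  rw [hg]
  exact (aestronglyMeasurable_deriv w μ).add (hwc.aestronglyMeasurable.const_smul a)

theorem sq_mul_integral_norm_sq_le {a : ℝ} {w g : ℝ → E}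
    (hw : ∀ t, HasDerivAt w (g t - a • w t) t) (hwi : Integrable (fun t => ‖w t‖ ^ 2))
    (hgi : Integrable (fun t => ‖g t‖ ^ 2)) :
    a ^ 2 * ∫ t, ‖w t‖ ^ 2 ≤ ∫ t, ‖g t‖ ^ 2 := by
  have hwc : Continuous w := continuous_iff_continuousAt.2 fun t => (hw t).continuousAt
  have hwg : Integrable (fun t => ⟪w t, g t⟫) := by
    refine ((hwi.add hgi).div_const 2).mono'
      (hwc.aestronglyMeasurable.inner (aestronglyMeasurable_of_hasDerivAt_sub_smul hw volume))
      (ae_of_all _ fun t => ?_)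
    have := two_mul_abs_mul_abs_real_inner_le 1 (w t) (g t)
    rw [abs_one, mul_one, one_pow, one_mul] at this
    rw [Real.norm_eq_abs, Pi.add_apply]
    linarith
  have hX : 0 ≤ ∫ t, ‖w t‖ ^ 2 := integral_nonneg fun t => by positivity
  have key : 2 * (a ^ 2 * ∫ t, ‖w t‖ ^ 2) ≤ a ^ 2 * (∫ t, ‖w t‖ ^ 2) + ∫ t, ‖g t‖ ^ 2 :=
    calc 2 * (a ^ 2 * ∫ t, ‖w t‖ ^ 2) = 2 * |a| * |∫ t, ⟪w t, g t⟫| := by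
          rw [integral_inner_eq_mul_integral_norm_sq hw hwi hwg, abs_mul, abs_of_nonneg hX,
            ← sq_abs a]
          ring
      _ ≤ 2 * |a| * ∫ t, |⟪w t, g t⟫| := by gcongr; exact abs_integral_le_integral_abs
      _ = ∫ t, 2 * |a| * |⟪w t, g t⟫| := (integral_const_mul _ _).symm
      _ ≤ ∫ t, (a ^ 2 * ‖w t‖ ^ 2 + ‖g t‖ ^ 2) :=
          integral_mono (hwg.abs.const_mul _) ((hwi.const_mul _).add hgi)
            fun t => two_mul_abs_mul_abs_real_inner_le a (w t) (g t)
      _ = a ^ 2 * (∫ t, ‖w t‖ ^ 2) + ∫ t, ‖g t‖ ^ 2 := by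
          rw [integral_add (hwi.const_mul _) hgi, integral_const_mul]
  linarith

theorem ofReal_sq_mul_lintegral_enorm_sq_le {a : ℝ} {w g : ℝ → E}
    (hw : ∀ t, HasDerivAt w (g t - a • w t) t) (hwfin : ∫⁻ t, ‖w t‖ₑ ^ 2 < ⊤) :
    ENNReal.ofReal (a ^ 2) * ∫⁻ t, ‖w t‖ₑ ^ 2 ≤ ∫⁻ t, ‖g t‖ₑ ^ 2 := by
  by_cases hgfin : ∫⁻ t, ‖g t‖ₑ ^ 2 = ⊤
  · exact hgfin ▸ le_top
  have hwc : Continuous w := continuous_iff_continuousAt.2 fun t => (hw t).continuousAt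
  have hwi := integrable_norm_sq_of_lintegral_enorm_sq_lt_top hwc.aestronglyMeasurable hwfin
  have hgi := integrable_norm_sq_of_lintegral_enorm_sq_lt_top
    (aestronglyMeasurable_of_hasDerivAt_sub_smul hw volume) (lt_top_iff_ne_top.2 hgfin)
  rw [← ofReal_integral_norm_sq hwi, ← ofReal_integral_norm_sq hgi,
    ← ENNReal.ofReal_mul (sq_nonneg a)]
  exact ENNReal.ofReal_le_ofReal (sq_mul_integral_norm_sq_le hw hwi hgi)

theorem ofReal_sq_mul_lintegral_weighted_le {l θ : ℝ} {v h : ℝ → E}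
    (hv : ∀ t, HasDerivAt v (h t - l • v t) t)
    (hvfin : ∫⁻ t, ENNReal.ofReal (Real.exp (2 * θ * t)) * ‖v t‖ₑ ^ 2 < ⊤) :
    ENNReal.ofReal ((l - θ) ^ 2) * ∫⁻ t, ENNReal.ofReal (Real.exp (2 * θ * t)) * ‖v t‖ₑ ^ 2 ≤
      ∫⁻ t, ENNReal.ofReal (Real.exp (2 * θ * t)) * ‖h t‖ₑ ^ 2 := by
  have hw : ∀ t, HasDerivAt (fun s => Real.exp (θ * s) • v s)
      (Real.exp (θ * t) • h t - (l - θ) • (Real.exp (θ * t) • v t)) t := fun t => by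
    refine ((((hasDerivAt_id' t).const_mul θ).exp).smul (hv t)).congr_deriv ?_
    module
  simp_rw [← enorm_exp_smul_sq] at hvfin ⊢
  exact ofReal_sq_mul_lintegral_enorm_sq_le hw hvfin

end

theorem le_ofReal_inv_mul_of_ofReal_mul_le {c : ℝ} (hc : 0 < c) {a b : ℝ≥0∞}
    (h : ENNReal.ofReal c * a ≤ b) : a ≤ ENNReal.ofReal c⁻¹ * b := by
  rw [ENNReal.ofReal_inv_of_pos hc, ← ENNReal.div_eq_inv_mul,
    ENNReal.le_div_iff_mul_le (Or.inl (ENNReal.ofReal_pos.2 hc).ne') (Or.inl ENNReal.ofReal_ne_top),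
    mul_comm]
  exact h

theorem Monotone.half_sub_le_abs_sub_midpoint {lam : ℕ → ℝ} (hmono : Monotone lam) (N n : ℕ) :
    (lam (N + 1) - lam N) / 2 ≤ |lam n - (lam N + lam (N + 1)) / 2| := by
  rcases le_or_gt n N with hn | hn
  · have := hmono hn
    exact le_abs.2 (Or.inr (by linarith))
  · have := hmono (Nat.succ_le_of_lt hn)
    exact le_abs.2 (Or.inl (by linarith))

theorem weighted_solution_operator_estimate_general (lam : ℕ → ℝ) (hmono : Monotone lam)
    (N : ℕ) (hgap : lam N < lam (N + 1)) (θ : ℝ) (hθ : θ = (lam N + lam (N + 1)) / 2)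
    (v h : ℕ → ℝ → ℂ) (hv : ∀ n, Differentiable ℝ (v n))
    (hode : ∀ n, ∀ t : ℝ, deriv (v n) t + (lam n : ℂ) * v n t = h n t)
    (hvfin : (∫⁻ t : ℝ, ENNReal.ofReal (Real.exp (2 * θ * t)) *
        ∑' n : ℕ, (‖v n t‖₊ : ℝ≥0∞) ^ 2) < ⊤) :
    (∫⁻ t : ℝ, ENNReal.ofReal (Real.exp (2 * θ * t)) * ∑' n : ℕ, (‖v n t‖₊ : ℝ≥0∞) ^ 2) ≤
      ENNReal.ofReal (4 / (lam (N + 1) - lam N) ^ 2) *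
        ∫⁻ t : ℝ, ENNReal.ofReal (Real.exp (2 * θ * t)) * ∑' n : ℕ, (‖h n t‖₊ : ℝ≥0∞) ^ 2 := by
  have hderiv : ∀ n t, HasDerivAt (v n) (h n t - lam n • v n t) t := fun n t => by
    rw [← hode n t, Complex.real_smul, add_sub_cancel_right]
    exact (hv n t).hasDerivAt
  have hvm n := (hv n).continuous.aestronglyMeasurable (μ := volume)
  have hhm n := aestronglyMeasurable_of_hasDerivAt_sub_smul (hderiv n) volume
  simp only [← enorm_eq_nnnorm] at hvfin ⊢
  rw [lintegral_mul_tsum (by fun_prop) fun n => (hvm n).enorm.pow_const 2] at hvfin ⊢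
  rw [lintegral_mul_tsum (by fun_prop) fun n => (hhm n).enorm.pow_const 2]
  set δ := (lam (N + 1) - lam N) / 2
  have hδ : 0 < δ := by simp only [δ]; linarith
  have hmode n := calc
    ENNReal.ofReal (δ ^ 2) *
        ∫⁻ t, ENNReal.ofReal (Real.exp (2 * θ * t)) * ‖v n t‖ₑ ^ 2
      ≤ ENNReal.ofReal ((lam n - θ) ^ 2) *
        ∫⁻ t, ENNReal.ofReal (Real.exp (2 * θ * t)) * ‖v n t‖ₑ ^ 2 := by
        refine mul_le_mul_left (ENNReal.ofReal_le_ofReal ?_) _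
        rw [sq_le_sq, abs_of_pos hδ, hθ]
        exact hmono.half_sub_le_abs_sub_midpoint N n
    _ ≤ ∫⁻ t, ENNReal.ofReal (Real.exp (2 * θ * t)) * ‖h n t‖ₑ ^ 2 :=
        ofReal_sq_mul_lintegral_weighted_le (hderiv n) ((ENNReal.le_tsum n).trans_lt hvfin)
  have hC : 4 / (lam (N + 1) - lam N) ^ 2 = (δ ^ 2)⁻¹ := by
    simp only [δ]; field_simp; ring
  rw [hC]
  refine le_ofReal_inv_mul_of_ofReal_mul_le (by positivity) ?_
  rw [← ENNReal.tsum_mul_left]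
  exact ENNReal.tsum_le_tsum hmode

/-- Solution operator estimate for the linear problem `∂_t v + A v = h` in the weighted
trajectory space `L²_θ(ℝ, H)` with `θ = (λ_N + λ_{N+1})/2`, written in Fourier
coordinates: if `v_n' + λ_n v_n = h_n` for all `n` and both weighted integrals are
finite, then `‖v‖²_{L²_θ} ≤ 4 (λ_{N+1} − λ_N)⁻² ‖h‖²_{L²_θ}`. -/
theorem weighted_solution_operator_estimate (lam : ℕ → ℝ) (hmono : Monotone lam)
    (N : ℕ) (hgap : lam N < lam (N + 1)) (θ : ℝ) (hθ : θ = (lam N + lam (N + 1)) / 2)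
    (v h : ℕ → ℝ → ℂ) (hv : ∀ n, Differentiable ℝ (v n)) (hh : ∀ n, Measurable (h n))
    (hode : ∀ n, ∀ t : ℝ, deriv (v n) t + (lam n : ℂ) * v n t = h n t)
    (hvfin : (∫⁻ t : ℝ, ENNReal.ofReal (Real.exp (2 * θ * t)) *
        ∑' n : ℕ, (‖v n t‖₊ : ℝ≥0∞) ^ 2) < ⊤)
    (hhfin : (∫⁻ t : ℝ, ENNReal.ofReal (Real.exp (2 * θ * t)) *
        ∑' n : ℕ, (‖h n t‖₊ : ℝ≥0∞) ^ 2) < ⊤) :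
    (∫⁻ t : ℝ, ENNReal.ofReal (Real.exp (2 * θ * t)) * ∑' n : ℕ, (‖v n t‖₊ : ℝ≥0∞) ^ 2) ≤
      ENNReal.ofReal (4 / (lam (N + 1) - lam N) ^ 2) *
        ∫⁻ t : ℝ, ENNReal.ofReal (Real.exp (2 * θ * t)) * ∑' n : ℕ, (‖h n t‖₊ : ℝ≥0∞) ^ 2 :=
  weighted_solution_operator_estimate_general lam hmono N hgap θ hθ v h hv hode hvfin
end

section
/- Let θ : ℂ → ℂ be twice continuously differentiable in the real sense with ‖D²θ(ξ)‖ ≤ M for all ξ ∈ ℂ, and let C* > 0. Then for all families w, z : ℤ³\{0} → ℂ³ one has Σ_{j≠0} |W(w+z)_j − W(w)_j − (W′(w)z)_j|² ≤ (M/(2C*))² (Σ_{j≠0} |z_j|²) (Σ_{j≠0} |j|⁶ |z_j|²); i.e., ‖W(w₁) − W(w₂) − W′(w₁)(w₁−w₂)‖_H ≤ (M/(2C*)) ‖w₁−w₂‖_H ‖w₁−w₂‖_{H³} with z = w₁ − w₂ (up to the choice of base point). -/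
noncomputable section

/-- Squared Euclidean norm `|j|²` on `ℤ³`. -/
def znormSq (j : Fin 3 → ℤ) : ℝ := ∑ i, ((j i : ℝ))^2

/-- Euclidean norm `|j|` on `ℤ³`. -/
def znorm (j : Fin 3 → ℤ) : ℝ := Real.sqrt (znormSq j)

/-- Squared Euclidean norm `|x|² = Σ_k |x^k|²` of a vector `x ∈ ℂ³`. -/
def vnormSq (x : Fin 3 → ℂ) : ℝ := ∑ i, ‖x i‖ ^ 2

/-- The Leray projector matrix `P_j = Id − |j|⁻² j jᵀ` acting on `ℂ³`. -/
def leray (j : Fin 3 → ℤ) (x : Fin 3 → ℂ) : Fin 3 → ℂ :=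
  fun i => x i - ((∑ k, (j k : ℂ) * x k) / ((znormSq j : ℝ) : ℂ)) * (j i : ℂ)

/-- The truncation map `W`, defined coefficientwise by
`W(w)_j = (C*/|j|³) P_j θ⃗(|j|³ w_j / C*)`. -/
def Wmap (θ : ℂ → ℂ) (Cs : ℝ) (w : (Fin 3 → ℤ) → (Fin 3 → ℂ)) (j : Fin 3 → ℤ) :
    Fin 3 → ℂ :=
  fun i => ((Cs / (znorm j) ^ 3 : ℝ) : ℂ) *
    leray j (fun k => θ ((((znorm j) ^ 3 / Cs : ℝ) : ℂ) * w j k)) i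

/-- The derivative of the truncation map,
`(W′(w)z)_j = P_j Dθ⃗(|j|³ w_j / C*)[z_j]`. -/
def Wderiv (θ : ℂ → ℂ) (Cs : ℝ) (w z : (Fin 3 → ℤ) → (Fin 3 → ℂ)) (j : Fin 3 → ℤ) :
    Fin 3 → ℂ :=
  leray j (fun k => fderiv ℝ θ ((((znorm j) ^ 3 / Cs : ℝ) : ℂ) * w j k) (z j k))

/-! With `s = |j|³ / C*`, the `j`-th remainder `W(w+z)_j − W(w)_j − W′(w)z_j` is `s⁻¹ P_j R`,
where `R` is the componentwise second-order Taylor remainder of `θ` at `s w_j` in direction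
`s z_j`. Since `Dθ` is `M`-Lipschitz, `|R| ≤ (M/2) |s z_j|²`, and `P_j` is an orthogonal
projection, so the `j`-th term is at most `(M / (2C*))² |z_j|² · |j|⁶ |z_j|²`. Summing over `j`
with `Σ a_j b_j ≤ (Σ a_j)(Σ b_j)` gives the estimate. -/

section Taylor

variable {E F : Type*} [NormedAddCommGroup E] [NormedSpace ℝ E]
  [NormedAddCommGroup F] [NormedSpace ℝ F] {f : E → F} {M : ℝ}

theorem norm_sub_sub_fderiv_le_of_norm_fderiv_sub_le (hf : Differentiable ℝ f) (a b : E)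
    (hlip : ∀ x, ‖fderiv ℝ f x - fderiv ℝ f a‖ ≤ M * ‖x - a‖) :
    ‖f (a + b) - f a - fderiv ℝ f a b‖ ≤ M / 2 * ‖b‖ ^ 2 := by
  set φ : ℝ → F := fun t => f (a + t • b) - f a - t • fderiv ℝ f a b
  have hφ : ∀ t : ℝ, HasDerivAt φ (fderiv ℝ f (a + t • b) b - fderiv ℝ f a b) t := by
    intro t
    have hline : HasDerivAt (fun t : ℝ => a + t • b) b t := by
      simpa using ((hasDerivAt_id t).smul_const b).const_add a
    have hlin : HasDerivAt (fun t : ℝ => t • fderiv ℝ f a b) (fderiv ℝ f a b) t := by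
      simpa using (hasDerivAt_id t).smul_const (fderiv ℝ f a b)
    exact (((hf _).hasFDerivAt.comp_hasDerivAt t hline).sub_const (f a)).sub hlin
  have hB : ∀ t : ℝ, HasDerivAt (fun t => M * ‖b‖ ^ 2 * t ^ 2 / 2) (M * ‖b‖ ^ 2 * t) t := by
    intro t
    refine (((hasDerivAt_pow 2 t).const_mul (M * ‖b‖ ^ 2)).div_const 2).congr_deriv ?_
    ring
  have hbound : ∀ t ∈ Set.Ico (0 : ℝ) 1,
      ‖fderiv ℝ f (a + t • b) b - fderiv ℝ f a b‖ ≤ M * ‖b‖ ^ 2 * t := by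
    rintro t ⟨ht, -⟩
    calc ‖fderiv ℝ f (a + t • b) b - fderiv ℝ f a b‖
        = ‖(fderiv ℝ f (a + t • b) - fderiv ℝ f a) b‖ := rfl
      _ ≤ M * ‖t • b‖ * ‖b‖ := by
          refine ((fderiv ℝ f (a + t • b) - fderiv ℝ f a).le_opNorm b).trans ?_
          gcongr
          simpa using hlip (a + t • b)
      _ = M * ‖b‖ ^ 2 * t := by rw [norm_smul, Real.norm_of_nonneg ht]; ring
  have h := image_norm_le_of_norm_deriv_right_le_deriv_boundary
    (fun t _ => (hφ t).continuousAt.continuousWithinAt) (fun t _ => (hφ t).hasDerivWithinAt)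
    (by simp [φ]) hB hbound (Set.right_mem_Icc.mpr zero_le_one)
  simpa [φ, mul_div_right_comm] using h

theorem norm_sub_sub_fderiv_le_of_contDiff_two (hf : ContDiff ℝ 2 f)
    (hbd : ∀ x, ‖fderiv ℝ (fderiv ℝ f) x‖ ≤ M) (a b : E) :
    ‖f (a + b) - f a - fderiv ℝ f a b‖ ≤ M / 2 * ‖b‖ ^ 2 := by
  have hf' : Differentiable ℝ (fderiv ℝ f) :=
    (hf.fderiv_right (m := 1) (by norm_num)).differentiable (by norm_num)
  refine norm_sub_sub_fderiv_le_of_norm_fderiv_sub_le (hf.differentiable (by norm_num)) a b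
    fun x => ?_
  exact Convex.norm_image_sub_le_of_norm_fderiv_le (fun y _ => hf' y) (fun y _ => hbd y)
    convex_univ trivial trivial

end Taylor

theorem ENNReal.tsum_mul_le_tsum_mul_tsum {α : Type*} (f g : α → ENNReal) :
    ∑' i, f i * g i ≤ (∑' i, f i) * ∑' i, g i :=
  calc ∑' i, f i * g i ≤ ∑' i, f i * ∑' i, g i :=
        ENNReal.tsum_le_tsum fun i => by gcongr; exact ENNReal.le_tsum i
    _ = (∑' i, f i) * ∑' i, g i := ENNReal.tsum_mul_right

lemma vnormSq_nonneg (x : Fin 3 → ℂ) : 0 ≤ vnormSq x :=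
  Finset.sum_nonneg fun _ _ => sq_nonneg _

lemma vnormSq_eq_norm_sq (x : Fin 3 → ℂ) :
    vnormSq x = ‖(WithLp.toLp 2 x : EuclideanSpace ℂ (Fin 3))‖ ^ 2 :=
  (EuclideanSpace.norm_sq_eq _).symm

-- Also for `j = 0`: there `0 / 0 = 0` makes `leray 0` the identity, as is the projection
-- onto `(span {0})ᗮ`.
lemma leray_eq_starProjection (j : Fin 3 → ℤ) (x : Fin 3 → ℂ) :
    WithLp.toLp 2 (leray j x) =
      (ℂ ∙ (WithLp.toLp 2 fun k => (j k : ℂ) : EuclideanSpace ℂ (Fin 3)))ᗮ.starProjection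
        (WithLp.toLp 2 x) := by
  rw [Submodule.starProjection_orthogonal, sub_apply,
    Submodule.starProjection_singleton, ← vnormSq_eq_norm_sq]
  ext i
  simp [leray, vnormSq, znormSq, EuclideanSpace.inner_toLp_toLp, dotProduct, mul_comm]

lemma vnormSq_leray_le (j : Fin 3 → ℤ) (x : Fin 3 → ℂ) : vnormSq (leray j x) ≤ vnormSq x := by
  rw [vnormSq_eq_norm_sq, vnormSq_eq_norm_sq, leray_eq_starProjection]
  gcongr
  exact Submodule.norm_starProjection_apply_le _ _

lemma vnormSq_smul (c : ℂ) (x : Fin 3 → ℂ) : vnormSq (c • x) = ‖c‖ ^ 2 * vnormSq x := by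
  simp only [vnormSq, Pi.smul_apply, smul_eq_mul, norm_mul, mul_pow, Finset.mul_sum]

lemma vnormSq_le_of_norm_le_mul_norm_sq {x y : Fin 3 → ℂ} {K : ℝ}
    (h : ∀ k, ‖x k‖ ≤ K * ‖y k‖ ^ 2) : vnormSq x ≤ K ^ 2 * vnormSq y ^ 2 :=
  calc vnormSq x ≤ ∑ k, (K * ‖y k‖ ^ 2) ^ 2 :=
        Finset.sum_le_sum fun k _ => pow_le_pow_left₀ (norm_nonneg _) (h k) 2
    _ = K ^ 2 * ∑ k, (‖y k‖ ^ 2) ^ 2 := by simp only [mul_pow, Finset.mul_sum]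
    _ ≤ K ^ 2 * vnormSq y ^ 2 := by
        gcongr
        exact Finset.sum_sq_le_sq_sum_of_nonneg fun k _ => sq_nonneg _

lemma leray_sub (j : Fin 3 → ℤ) (x y : Fin 3 → ℂ) : leray j (x - y) = leray j x - leray j y := by
  ext i
  simp only [leray, Pi.sub_apply, mul_sub, Finset.sum_sub_distrib]
  ring

lemma leray_smul (j : Fin 3 → ℤ) (c : ℂ) (x : Fin 3 → ℂ) : leray j (c • x) = c • leray j x := by
  ext i
  simp only [leray, Pi.smul_apply, smul_eq_mul, mul_left_comm _ c, ← Finset.mul_sum]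
  ring

lemma Wmap_add_sub_sub_Wderiv (θ : ℂ → ℂ) (Cs : ℝ) (w z : (Fin 3 → ℤ) → (Fin 3 → ℂ))
    (j : Fin 3 → ℤ) (hs : znorm j ^ 3 / Cs ≠ 0) :
    (fun i => Wmap θ Cs (w + z) j i - Wmap θ Cs w j i - Wderiv θ Cs w z j i) =
      ((znorm j ^ 3 / Cs : ℝ) : ℂ)⁻¹ • leray j (fun k =>
        θ ((znorm j ^ 3 / Cs : ℝ) * w j k + (znorm j ^ 3 / Cs : ℝ) * z j k)
          - θ ((znorm j ^ 3 / Cs : ℝ) * w j k)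
          - fderiv ℝ θ ((znorm j ^ 3 / Cs : ℝ) * w j k) ((znorm j ^ 3 / Cs : ℝ) * z j k)) := by
  set s : ℝ := znorm j ^ 3 / Cs
  have hW : ∀ v : (Fin 3 → ℤ) → (Fin 3 → ℂ),
      Wmap θ Cs v j = (s : ℂ)⁻¹ • leray j (fun k => θ (s * v j k)) := fun v => by
    ext i
    simp only [Wmap, Pi.smul_apply, smul_eq_mul, ← inv_div (znorm j ^ 3) Cs, Complex.ofReal_inv]
    rfl
  have hD : Wderiv θ Cs w z j =
      (s : ℂ)⁻¹ • leray j (fun k => fderiv ℝ θ (s * w j k) (s * z j k)) := by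
    rw [← leray_smul, Wderiv]
    congr 1
    ext k
    have hs' : (s : ℂ) ≠ 0 := Complex.ofReal_ne_zero.mpr hs
    rw [Pi.smul_apply, smul_eq_mul, ← Complex.real_smul (x := s) (z := z j k), map_smul,
      Complex.real_smul, inv_mul_cancel_left₀ hs']
  change Wmap θ Cs (w + z) j - Wmap θ Cs w j - Wderiv θ Cs w z j = _
  rw [hW, hW, hD, ← smul_sub, ← smul_sub, ← leray_sub, ← leray_sub]
  simp only [Pi.add_apply, mul_add]
  rfl

lemma znorm_pos {j : Fin 3 → ℤ} (hj : j ≠ 0) : 0 < znorm j := by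
  obtain ⟨i, hi⟩ : ∃ i, j i ≠ 0 := Function.ne_iff.mp hj
  have hterm : (0 : ℝ) < (j i : ℝ) ^ 2 := by positivity
  exact Real.sqrt_pos.mpr (hterm.trans_le (Finset.single_le_sum
    (f := fun i => ((j i : ℝ)) ^ 2) (fun i _ => sq_nonneg _) (Finset.mem_univ i)))

lemma vnormSq_Wmap_taylor_remainder_le (θ : ℂ → ℂ) (M : ℝ) (hsmooth : ContDiff ℝ 2 θ)
    (hbd : ∀ ξ : ℂ, ‖fderiv ℝ (fderiv ℝ θ) ξ‖ ≤ M) (Cs : ℝ) (hCs : 0 < Cs)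
    (w z : (Fin 3 → ℤ) → (Fin 3 → ℂ)) {j : Fin 3 → ℤ} (hj : j ≠ 0) :
    vnormSq (fun i => Wmap θ Cs (w + z) j i - Wmap θ Cs w j i - Wderiv θ Cs w z j i)
      ≤ (M / (2 * Cs)) ^ 2 * (vnormSq (z j) * (znorm j ^ 6 * vnormSq (z j))) := by
  have hs : 0 < znorm j ^ 3 / Cs := div_pos (pow_pos (znorm_pos hj) 3) hCs
  set s : ℝ := znorm j ^ 3 / Cs with hs_def
  have htaylor : ∀ k, ‖θ (s * w j k + s * z j k) - θ (s * w j k)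
      - fderiv ℝ θ (s * w j k) (s * z j k)‖ ≤ M / 2 * ‖((s : ℂ) • z j) k‖ ^ 2 :=
    fun k => norm_sub_sub_fderiv_le_of_contDiff_two hsmooth hbd _ _
  calc _ = ‖(s : ℂ)⁻¹‖ ^ 2 * vnormSq (leray j fun k => θ (s * w j k + s * z j k)
          - θ (s * w j k) - fderiv ℝ θ (s * w j k) (s * z j k)) := by
        rw [Wmap_add_sub_sub_Wderiv θ Cs w z j hs.ne', vnormSq_smul]
    _ ≤ ‖(s : ℂ)⁻¹‖ ^ 2 * ((M / 2) ^ 2 * vnormSq ((s : ℂ) • z j) ^ 2) := by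
        gcongr
        exact (vnormSq_leray_le _ _).trans (vnormSq_le_of_norm_le_mul_norm_sq htaylor)
    _ = (M / (2 * Cs)) ^ 2 * (vnormSq (z j) * (znorm j ^ 6 * vnormSq (z j))) := by
        rw [vnormSq_smul, norm_inv, Complex.norm_real, Real.norm_of_nonneg hs.le, hs_def]
        field_simp

/-- Quadratic estimate for the Taylor remainder of the truncation map: if `θ` is `C²`
in the real sense with `‖D²θ(ξ)‖ ≤ M` everywhere, then
`Σ_{j≠0} |W(w+z)_j − W(w)_j − (W′(w)z)_j|² ≤ (M/(2C*))² (Σ_{j≠0}|z_j|²)(Σ_{j≠0}|j|⁶|z_j|²)`,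
i.e. `‖W(w₁) − W(w₂) − W′(w₁)(w₁−w₂)‖_H ≤ (M/(2C*)) ‖w₁−w₂‖_H ‖w₁−w₂‖_{H³}`. -/
theorem Wmap_taylor_remainder (θ : ℂ → ℂ) (M : ℝ) (hsmooth : ContDiff ℝ 2 θ)
    (hbd : ∀ ξ : ℂ, ‖fderiv ℝ (fderiv ℝ θ) ξ‖ ≤ M) (Cs : ℝ) (hCs : 0 < Cs)
    (w z : (Fin 3 → ℤ) → (Fin 3 → ℂ)) :
    (∑' j : {j : Fin 3 → ℤ // j ≠ 0},
        ENNReal.ofReal (vnormSq (fun i =>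
          Wmap θ Cs (w + z) j.1 i - Wmap θ Cs w j.1 i - Wderiv θ Cs w z j.1 i))) ≤
      ENNReal.ofReal ((M / (2 * Cs)) ^ 2) *
        (∑' j : {j : Fin 3 → ℤ // j ≠ 0}, ENNReal.ofReal (vnormSq (z j.1))) *
        ∑' j : {j : Fin 3 → ℤ // j ≠ 0},
          ENNReal.ofReal ((znorm j.1) ^ 6 * vnormSq (z j.1)) := by
  calc _ ≤ ∑' j : {j : Fin 3 → ℤ // j ≠ 0}, ENNReal.ofReal ((M / (2 * Cs)) ^ 2) *
          (ENNReal.ofReal (vnormSq (z j.1)) * ENNReal.ofReal (znorm j.1 ^ 6 * vnormSq (z j.1))) :=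
        ENNReal.tsum_le_tsum fun j => by
          rw [← ENNReal.ofReal_mul (vnormSq_nonneg _), ← ENNReal.ofReal_mul (sq_nonneg _)]
          exact ENNReal.ofReal_le_ofReal
            (vnormSq_Wmap_taylor_remainder_le θ M hsmooth hbd Cs hCs w z j.2)
    _ ≤ _ := by
        rw [ENNReal.tsum_mul_left, mul_assoc]
        gcongr
        exact ENNReal.tsum_mul_le_tsum_mul_tsum _ _

end
end

section
/- Let a : ℤ³ → ℂ satisfy Σ_j |a_j|² < ∞ and let b : ℤ³ → ℂ satisfy b_0 = 0 and Σ_{l≠0} |l|⁶ |b_l|² < ∞. Then the constant C₀ = Σ_{l∈ℤ³, l≠0} |l|⁻⁴ is finite, for every j ∈ ℤ³ the series Σ_l |l| |a_{j−l}| |b_l| converges, and Σ_{j∈ℤ³} (Σ_{l∈ℤ³} |l| |a_{j−l}| |b_l|)² ≤ C₀ (Σ_{j∈ℤ³} |a_j|²) (Σ_{l≠0} |l|⁶ |b_l|²). -/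
/-!
Write `|l| |b_l| = |l|⁻² · |l|³ |b_l|`. For fixed `j`, Cauchy–Schwarz in `l` bounds the square
of the `j`-th convolution sum by `C₀ · Σ_l |l|⁶ |b_l|² |a_{j-l}|²`, and summing over `j` (a
convolution of two summable sequences) gives `C₀ · Σ_l |l|⁶ |b_l|² · Σ_j |a_j|²`. Finiteness of
`C₀` is the lattice `p`-series bound for `ℤ³ ⊂ ℝ³` with exponent `4 > 3`.
-/

noncomputable section

theorem summable_mul_and_sq_tsum_mul_le {ι : Type*} {f g : ι → ℝ} (hf : ∀ i, 0 ≤ f i)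
    (hg : ∀ i, 0 ≤ g i) (hf2 : Summable fun i => f i ^ 2) (hg2 : Summable fun i => g i ^ 2) :
    Summable (fun i => f i * g i) ∧ (∑' i, f i * g i) ^ 2 ≤ (∑' i, f i ^ 2) * ∑' i, g i ^ 2 := by
  obtain ⟨hfg, hle⟩ := Real.summable_and_inner_le_Lp_mul_Lq_tsum_of_nonneg .two_two hf hg
    (by simpa using hf2) (by simpa using hg2)
  refine ⟨hfg, ?_⟩
  have hf2' : 0 ≤ ∑' i, f i ^ 2 := tsum_nonneg fun i => sq_nonneg _
  have hg2' : 0 ≤ ∑' i, g i ^ 2 := tsum_nonneg fun i => sq_nonneg _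
  simp only [Real.rpow_two, ← Real.sqrt_eq_rpow] at hle
  calc (∑' i, f i * g i) ^ 2 ≤ (√(∑' i, f i ^ 2) * √(∑' i, g i ^ 2)) ^ 2 :=
        pow_le_pow_left₀ (tsum_nonneg fun i => mul_nonneg (hf i) (hg i)) hle 2
    _ = (∑' i, f i ^ 2) * ∑' i, g i ^ 2 := by rw [mul_pow, Real.sq_sqrt hf2', Real.sq_sqrt hg2']

theorem hasSum_subtype_ne_zero_iff {G M : Type*} [Zero G] [AddCommMonoid M] [TopologicalSpace M]
    {f : G → M} (hf : f 0 = 0) {a : M} :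
    HasSum (fun l : {l : G // l ≠ 0} => f l) a ↔ HasSum f a :=
  hasSum_subtype_iff_of_support_subset (s := {0}ᶜ) <|
    Function.support_subset_iff'.2 fun l hl => by rwa [Set.notMem_compl_iff.1 hl]

section Convolution

variable {G : Type*} [AddGroup G] {f g : G → ℝ}

theorem summable_mul_sub (hf : ∀ l, 0 ≤ f l) (hg : ∀ l, 0 ≤ g l) (hfs : Summable f)
    (hgs : Summable g) (j : G) : Summable fun l => f l * g (j - l) :=
  (hfs.mul_right (∑' i, g i)).of_nonneg_of_le (fun l => mul_nonneg (hf l) (hg _))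
    fun l => mul_le_mul_of_nonneg_left (hgs.le_tsum _ fun i _ => hg i) (hf l)

theorem hasSum_tsum_mul_sub (hf : ∀ l, 0 ≤ f l) (hg : ∀ l, 0 ≤ g l) (hfs : Summable f)
    (hgs : Summable g) : HasSum (fun j => ∑' l, f l * g (j - l)) ((∑' l, f l) * ∑' j, g j) := by
  have hrow (l : G) : HasSum (fun j => f l * g (j - l)) (f l * ∑' j, g j) :=
    ((Equiv.subRight l).hasSum_iff.2 hgs.hasSum).mul_left (f l)
  have hs : Summable fun p : G × G => f p.1 * g (p.2 - p.1) :=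
    (summable_prod_of_nonneg fun p => mul_nonneg (hf _) (hg _)).2
      ⟨fun l => (hrow l).summable, by simpa only [(hrow _).tsum_eq] using hfs.mul_right _⟩
  have hprod : HasSum (fun p : G × G => f p.1 * g (p.2 - p.1)) ((∑' l, f l) * ∑' j, g j) := by
    convert hs.hasSum using 1
    rw [hs.tsum_prod, ← tsum_mul_right]
    exact tsum_congr fun l => (hrow l).tsum_eq.symm
  exact ((Equiv.prodComm G G).hasSum_iff.2 hprod).prod_fiberwise fun j =>
    (summable_mul_sub hf hg hfs hgs j).hasSum

variable {u v A : G → ℝ}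

theorem summable_and_tsum_sq_tsum_mul_mul_sub_le (hu : ∀ l, 0 ≤ u l) (hv : ∀ l, 0 ≤ v l)
    (hA : ∀ j, 0 ≤ A j) (hu2 : Summable fun l => u l ^ 2) (hv2 : Summable fun l => v l ^ 2)
    (hA2 : Summable fun j => A j ^ 2) :
    (∀ j, Summable fun l => u l * v l * A (j - l)) ∧
      Summable (fun j => (∑' l, u l * v l * A (j - l)) ^ 2) ∧
      ∑' j, (∑' l, u l * v l * A (j - l)) ^ 2 ≤
        (∑' l, u l ^ 2) * (∑' j, A j ^ 2) * ∑' l, v l ^ 2 := by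
  have hconv := hasSum_tsum_mul_sub (fun l => sq_nonneg (v l)) (fun j => sq_nonneg (A j)) hv2 hA2
  have hvA := summable_mul_sub (fun l => sq_nonneg (v l)) (fun j => sq_nonneg (A j)) hv2 hA2
  have hCS (j : G) := summable_mul_and_sq_tsum_mul_le hu (fun l => mul_nonneg (hv l) (hA (j - l)))
    hu2 (by simpa only [mul_pow] using hvA j)
  simp only [mul_pow, ← mul_assoc] at hCS
  have hbound := hconv.summable.mul_left (∑' l, u l ^ 2)
  have hsq := hbound.of_nonneg_of_le (fun _ => sq_nonneg _) fun j => (hCS j).2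
  refine ⟨fun j => (hCS j).1, hsq, ?_⟩
  calc ∑' j, (∑' l, u l * v l * A (j - l)) ^ 2
      ≤ ∑' j, (∑' l, u l ^ 2) * ∑' l, v l ^ 2 * A (j - l) ^ 2 :=
        hsq.tsum_le_tsum (fun j => (hCS j).2) hbound
    _ = (∑' l, u l ^ 2) * (∑' j, A j ^ 2) * ∑' l, v l ^ 2 := by
        rw [tsum_mul_left, hconv.tsum_eq]; ring

end Convolution

open Module Submodule in
theorem summable_norm_intCast_inv_pow {ι : Type*} [Fintype ι] {n : ℕ}
    (hn : Fintype.card ι < n) :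
    Summable fun l : ι → ℤ => ‖WithLp.toLp 2 (fun i => (l i : ℝ))‖⁻¹ ^ n := by
  classical
  let b := (EuclideanSpace.basisFun ι ℝ).toBasis
  let e := (b.restrictScalars ℤ).equivFun
  have hL := ZLattice.summable_norm_pow_inv (span ℤ (Set.range b)) n
    (by rwa [finrank_eq_card_basis (b.restrictScalars ℤ)])
  refine (e.symm.toEquiv.summable_iff.2 hL).congr fun l => ?_
  have he : (e.symm l : EuclideanSpace ℝ ι) = WithLp.toLp 2 (fun i => (l i : ℝ)) := by
    simp_rw [e, Basis.equivFun_symm_apply, coe_sum, coe_smul_of_tower,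
      Basis.restrictScalars_apply]
    ext i
    simp [b, EuclideanSpace.basisFun_apply, Pi.single_apply]
  simp [← he]

theorem znorm_eq_norm (l : Fin 3 → ℤ) : znorm l = ‖WithLp.toLp 2 (fun i => (l i : ℝ))‖ := by
  simp [znorm, znormSq, EuclideanSpace.norm_eq]

theorem znorm_nonneg (l : Fin 3 → ℤ) : 0 ≤ znorm l :=
  Real.sqrt_nonneg _

theorem znorm_zero : znorm 0 = 0 := by
  simp [znorm, znormSq]

theorem summable_inv_znorm_pow_four : Summable fun l : Fin 3 → ℤ => (znorm l ^ 4)⁻¹ := by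
  simpa [znorm_eq_norm, inv_pow] using
    summable_norm_intCast_inv_pow (ι := Fin 3) (n := 4) (by simp)

-- Also true at `x = 0`, where both sides vanish because `0⁻¹ = 0`.
theorem mul_mul_eq_inv_sq_mul_pow_three_mul (x y z : ℝ) :
    x * y * z = (x ^ 2)⁻¹ * (x ^ 3 * z) * y := by
  rcases eq_or_ne x 0 with rfl | hx
  · simp
  · field_simp

theorem convolution_bilinear_estimate_general (a b : (Fin 3 → ℤ) → ℂ)
    (ha : Summable (fun j : Fin 3 → ℤ => ‖a j‖ ^ 2))
    (hb : Summable (fun l : {l : Fin 3 → ℤ // l ≠ 0} =>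
      (znorm l.1) ^ 6 * ‖b l.1‖ ^ 2)) :
    Summable (fun l : {l : Fin 3 → ℤ // l ≠ 0} => ((znorm l.1) ^ 4)⁻¹) ∧
    (∀ j : Fin 3 → ℤ, Summable (fun l : Fin 3 → ℤ =>
      znorm l * ‖a (j - l)‖ * ‖b l‖)) ∧
    Summable (fun j : Fin 3 → ℤ =>
      (∑' l : Fin 3 → ℤ, znorm l * ‖a (j - l)‖ * ‖b l‖) ^ 2) ∧
    (∑' j : Fin 3 → ℤ,
        (∑' l : Fin 3 → ℤ, znorm l * ‖a (j - l)‖ * ‖b l‖) ^ 2) ≤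
      (∑' l : {l : Fin 3 → ℤ // l ≠ 0}, ((znorm l.1) ^ 4)⁻¹) *
        (∑' j : Fin 3 → ℤ, ‖a j‖ ^ 2) *
        ∑' l : {l : Fin 3 → ℤ // l ≠ 0}, (znorm l.1) ^ 6 * ‖b l.1‖ ^ 2 := by
  have hC := (hasSum_subtype_ne_zero_iff (f := fun l => (znorm l ^ 4)⁻¹)
    (by simp [znorm_zero])).2 summable_inv_znorm_pow_four.hasSum
  have hB := (hasSum_subtype_ne_zero_iff (f := fun l => znorm l ^ 6 * ‖b l‖ ^ 2)
    (by simp [znorm_zero])).1 hb.hasSum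
  obtain ⟨hrow, hsq, hle⟩ := summable_and_tsum_sq_tsum_mul_mul_sub_le
    (u := fun l => (znorm l ^ 2)⁻¹) (v := fun l => znorm l ^ 3 * ‖b l‖) (A := fun j => ‖a j‖)
    (fun l => inv_nonneg.2 (pow_nonneg (znorm_nonneg l) 2))
    (fun l => mul_nonneg (pow_nonneg (znorm_nonneg l) 3) (norm_nonneg _)) (fun j => norm_nonneg _)
    (summable_inv_znorm_pow_four.congr fun l => by ring) (hB.summable.congr fun l => by ring) ha
  simp only [mul_mul_eq_inv_sq_mul_pow_three_mul (znorm _)]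
  refine ⟨hC.summable, hrow, hsq, ?_⟩
  rw [hC.tsum_eq, ← hB.tsum_eq]
  simpa only [inv_pow, ← pow_mul, mul_pow, Nat.reduceMul] using hle

/-- Fourier-coefficient form of the bilinear estimate
`‖(p·∇)q‖_{L²} ≤ C ‖p‖_{L²} ‖q‖_{H³}`: if `Σ_j |a_j|² < ∞`, `b_0 = 0` and
`Σ_{l≠0} |l|⁶ |b_l|² < ∞`, then `C₀ = Σ_{l≠0} |l|⁻⁴` is finite, each convolution
`Σ_l |l| |a_{j−l}| |b_l|` converges, and
`Σ_j (Σ_l |l| |a_{j−l}| |b_l|)² ≤ C₀ (Σ_j |a_j|²) (Σ_{l≠0} |l|⁶ |b_l|²)`. -/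
theorem convolution_bilinear_estimate (a b : (Fin 3 → ℤ) → ℂ)
    (ha : Summable (fun j : Fin 3 → ℤ => ‖a j‖ ^ 2))
    (hb0 : b 0 = 0)
    (hb : Summable (fun l : {l : Fin 3 → ℤ // l ≠ 0} =>
      (znorm l.1) ^ 6 * ‖b l.1‖ ^ 2)) :
    Summable (fun l : {l : Fin 3 → ℤ // l ≠ 0} => ((znorm l.1) ^ 4)⁻¹) ∧
    (∀ j : Fin 3 → ℤ, Summable (fun l : Fin 3 → ℤ =>
      znorm l * ‖a (j - l)‖ * ‖b l‖)) ∧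
    Summable (fun j : Fin 3 → ℤ =>
      (∑' l : Fin 3 → ℤ, znorm l * ‖a (j - l)‖ * ‖b l‖) ^ 2) ∧
    (∑' j : Fin 3 → ℤ,
        (∑' l : Fin 3 → ℤ, znorm l * ‖a (j - l)‖ * ‖b l‖) ^ 2) ≤
      (∑' l : {l : Fin 3 → ℤ // l ≠ 0}, ((znorm l.1) ^ 4)⁻¹) *
        (∑' j : Fin 3 → ℤ, ‖a j‖ ^ 2) *
        ∑' l : {l : Fin 3 → ℤ // l ≠ 0}, (znorm l.1) ^ 6 * ‖b l.1‖ ^ 2 :=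
  convolution_bilinear_estimate_general a b ha hb

end
end
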